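/- There is an isomorphism of finite quadratic forms u ⊕ u ≅ v ⊕ v, where u is the discriminant quadratic form of U(2) and v is the discriminant quadratic form of D4. -/

import Mathlib

noncomputable section

/-- The quadratic form `u ⊕ u` over `F₂`: two orthogonal copies of the
discriminant quadratic form of `U(2)` (hyperbolic plane: `q(e)=q(f)=0`,
`q(e+f)=1`).  Its values lie in `ℤ/2 ⊂ ℚ/2ℤ`. -/
def qUU : (Fin 4 → ZMod 2) → ZMod 2 := fun x => x 0 * x 1 + x 2 * x 3

/-- The quadratic form `v ⊕ v` over `F₂`: two orthogonal copies of the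
discriminant quadratic form of `D₄` (elliptic plane: `q = 1` on all three
nonzero vectors). -/
def qVV : (Fin 4 → ZMod 2) → ZMod 2 := fun x =>
  (x 0 ^ 2 + x 0 * x 1 + x 1 ^ 2) + (x 2 ^ 2 + x 2 * x 3 + x 3 ^ 2)

/-! The elliptic plane `v` has Arf invariant `1`, so `v ⊕ v` has Arf invariant `0` and is
therefore a sum of two hyperbolic planes. Explicitly, if `a₁, b₁, a₂, b₂` is the standard basis
of `v ⊕ v`, then `(b₁ + b₂, b₁ + a₂)` and `(a₁ + a₂ + b₂, a₁ + b₁ + a₂ + b₂)` are mutually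
orthogonal hyperbolic pairs: all four vectors are isotropic and each pair has polar value `1`.
Sending the standard basis of `u ⊕ u` to these vectors gives the isometry. -/

def uuToVV : (Fin 4 → ZMod 2) ≃ₗ[ZMod 2] (Fin 4 → ZMod 2) where
  toFun x := ![x 2 + x 3, x 0 + x 1 + x 3, x 1 + x 2 + x 3, x 0 + x 2 + x 3]
  invFun y := ![y 0 + y 3, y 0 + y 2, y 0 + y 1 + y 2 + y 3, y 1 + y 2 + y 3]
  map_add' x y := by
    ext i; fin_cases i <;> simp only [Pi.add_apply, Fin.reduceFinMk, Matrix.cons_val] <;> ring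
  map_smul' c x := by
    ext i
    fin_cases i <;>
      simp only [Pi.smul_apply, smul_eq_mul, RingHom.id_apply, Fin.reduceFinMk, Matrix.cons_val] <;>
      ring
  left_inv x := by
    ext i
    fin_cases i <;> simp only [Fin.reduceFinMk, Matrix.cons_val] <;> ring_nf <;> reduce_mod_char
  right_inv y := by
    ext i
    fin_cases i <;> simp only [Fin.reduceFinMk, Matrix.cons_val] <;> ring_nf <;> reduce_mod_char

theorem qVV_uuToVV (x : Fin 4 → ZMod 2) : qVV (uuToVV x) = qUU x := by
  simp only [qVV, qUU, uuToVV, LinearEquiv.coe_mk, LinearMap.coe_mk, AddHom.coe_mk,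
    Matrix.cons_val]
  ring_nf
  reduce_mod_char

/-- There is an isomorphism of finite quadratic forms `u ⊕ u ≅ v ⊕ v`:
a group automorphism of `(ℤ/2)⁴` carrying the quadratic form `u ⊕ u` to
`v ⊕ v`. -/
theorem uu_iso_vv :
    ∃ f : (Fin 4 → ZMod 2) ≃+ (Fin 4 → ZMod 2), ∀ x, qVV (f x) = qUU x :=
  ⟨uuToVV.toAddEquiv, qVV_uuToVV⟩
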